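/- Ancilla-recycling decomposition: let m, l ≥ 1 and k = m + l, and consider k+2 qutrits consisting of k control qutrits, one ancilla qutrit a, and one target qutrit t. Let A be the (k+2)-qutrit unitary that applies X+1 to the ancilla a when control qutrits 1,…,m are all in state |2⟩ (identity otherwise), and let B be the (k+2)-qutrit unitary that applies X+1 to the target t when control qutrits m+1,…,k together with the ancilla a are all in state |2⟩ (identity otherwise). Then (A·B)³ equals the (k+2)-qutrit unitary that applies X+1 to the target t when all k control qutrits are in state |2⟩ and acts as the identity otherwise (in particular it acts as the identity on the ancilla, whatever its state). -/

import Mathlib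

open Complex Matrix

noncomputable section

/-- The state space of `n` qutrits is indexed by functions `Fin n → Fin 3`. -/
abbrev QS (n : ℕ) : Type := Fin n → Fin 3

/-- Matrices (linear maps) on `n` qutrits. -/
abbrev QMat (n : ℕ) : Type := Matrix (QS n) (QS n) ℂ

/-- ω = e^{2πi/3}. -/
def ω3 : ℂ := Complex.exp (2 * Real.pi * Complex.I / 3)

/-- ζ = e^{2πi/9}. -/
def ζ9 : ℂ := Complex.exp (2 * Real.pi * Complex.I / 9)

/-- The single-qutrit Hadamard gate. -/
def Hgate : Matrix (Fin 3) (Fin 3) ℂ :=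
  (-Complex.I / (Real.sqrt 3 : ℂ)) • !![1, 1, 1; 1, ω3, ω3 ^ 2; 1, ω3 ^ 2, ω3]

/-- The single-qutrit S gate, S = ζ⁸·diag(1,1,ω). -/
def Sgate : Matrix (Fin 3) (Fin 3) ℂ := ζ9 ^ 8 • !![1, 0, 0; 0, 1, 0; 0, 0, ω3]

/-- The single-qutrit T gate, T = diag(1,ζ,ζ⁸). -/
def Tgate : Matrix (Fin 3) (Fin 3) ℂ := !![1, 0, 0; 0, ζ9, 0; 0, 0, ζ9 ^ 8]

/-- Apply the single-qutrit gate `A` on wire `i` of `n` qutrits, identity elsewhere. -/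
def applyOne {n : ℕ} (i : Fin n) (A : Matrix (Fin 3) (Fin 3) ℂ) : QMat n :=
  fun x y => if ∀ j, j ≠ i → x j = y j then A (x i) (y i) else 0

/-- The CX gate (CX|i,j⟩ = |i, i+j mod 3⟩) with control `c` and target `t`, identity
elsewhere. -/
def applyCX {n : ℕ} (c t : Fin n) : QMat n :=
  fun x y => if (∀ j, j ≠ t → x j = y j) ∧ x t = y c + y t then 1 else 0

/-- The `n`-qutrit Clifford+T generators: H, S or T on one wire, or CX on a pair of wires. -/
def CTGen (n : ℕ) : Set (QMat n) :=
  {M | (∃ i, M = applyOne i Hgate) ∨ (∃ i, M = applyOne i Sgate) ∨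
       (∃ i, M = applyOne i Tgate) ∨ (∃ c t, c ≠ t ∧ M = applyCX c t)}

/-- The `n`-qutrit Clifford+T group: the subgroup of the unitary group generated by the
Clifford+T generators. -/
def CliffordTGroup (n : ℕ) : Subgroup (Matrix.unitaryGroup (QS n) ℂ) :=
  Subgroup.closure {U : Matrix.unitaryGroup (QS n) ℂ | (U : QMat n) ∈ CTGen n}

/-- The `(k+m)`-qutrit unitary which applies `U` to the last `m` qutrits when the first `k`
qutrits are in the basis state `|v₁ … v_k⟩`, and is the identity otherwise. -/
def ctrlV (k m : ℕ) (v : Fin k → Fin 3) (U : QMat m) : QMat (k + m) :=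
  fun x y =>
    if ∀ i : Fin k, x (Fin.castAdd m i) = y (Fin.castAdd m i) then
      if ∀ i : Fin k, y (Fin.castAdd m i) = v i then
        U (fun j => x (Fin.natAdd k j)) (fun j => y (Fin.natAdd k j))
      else if ∀ j : Fin m, x (Fin.natAdd k j) = y (Fin.natAdd k j) then 1 else 0
    else 0

/-- The `|2⟩^{⊗k}`-controlled `U`: applies `U` to the last `m` qutrits when the first `k`
qutrits are all in state `|2⟩`, identity otherwise. -/
def ctrl2 (k m : ℕ) (U : QMat m) : QMat (k + m) := ctrlV k m (fun _ => 2) U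

/-- A single-qutrit gate viewed as a 1-qutrit matrix. -/
def oneQ (A : Matrix (Fin 3) (Fin 3) ℂ) : QMat 1 := fun x y => A (x 0) (y 0)

/-- The transposition X01, swapping |0⟩ and |1⟩ and fixing |2⟩. -/
def X01m : Matrix (Fin 3) (Fin 3) ℂ := !![0, 1, 0; 1, 0, 0; 0, 0, 1]

/-- The cyclic shift X+1, |t⟩ ↦ |t+1 mod 3⟩. -/
def Xp1m : Matrix (Fin 3) (Fin 3) ℂ := !![0, 0, 1; 1, 0, 0; 0, 1, 0]

/-- The `n`-qutrit unitary applying the single-qutrit gate `A` to wire `t` when every wire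
satisfying the control predicate `P` is in state |2⟩, and acting as the identity otherwise. -/
def ctrlP {n : ℕ} (P : Fin n → Prop) [DecidablePred P] (t : Fin n)
    (A : Matrix (Fin 3) (Fin 3) ℂ) : QMat n :=
  fun x y =>
    if ∀ j, j ≠ t → x j = y j then
      if ∀ i, P i → y i = 2 then A (x t) (y t)
      else if x t = y t then 1 else 0
    else 0

/-! Each gate `ctrlP P w Xp1m` is the permutation matrix of the basis map adding `1` at wire
`w` when every wire in `P` reads `2`, so `(A * B) ^ 3` is the permutation matrix of the third
iterate of the composite map. Neither gate moves a control, so along the orbit of a basis state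
`y` only the ancilla and the target change. If the first `m` controls read `2`, the ancilla runs
through `y a, y a + 1, y a + 2` back to `y a`, so `B` fires exactly once when its other controls
read `2`; otherwise `A` never fires and `B` fires zero or three times. -/

section FunMatrix

variable {α R : Type*} [DecidableEq α]

def funMatrix [Zero R] [One R] (f : α → α) : Matrix α α R :=
  Matrix.of fun x y => if x = f y then 1 else 0

theorem funMatrix_id [NonAssocSemiring R] : (funMatrix id : Matrix α α R) = 1 := by
  ext x y
  simp [funMatrix, Matrix.one_apply]

variable [Fintype α] [Semiring R]

theorem funMatrix_comp (f g : α → α) :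
    (funMatrix (f ∘ g) : Matrix α α R) = funMatrix f * funMatrix g := by
  ext x y
  rw [Matrix.mul_apply, Finset.sum_eq_single (g y)]
  · simp [funMatrix]
  · intro z _ hz
    simp [funMatrix, hz]
  · simp

theorem funMatrix_pow (f : α → α) (k : ℕ) :
    (funMatrix f : Matrix α α R) ^ k = funMatrix f^[k] := by
  induction k with
  | zero => exact funMatrix_id.symm
  | succ k ih => rw [pow_succ', ih, ← funMatrix_comp, Function.iterate_succ']

end FunMatrix

section ControlledShift

variable {n : ℕ}

def AllTwo (P : Fin n → Prop) (y : QS n) : Prop := ∀ i, P i → y i = 2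

instance (P : Fin n → Prop) [DecidablePred P] : DecidablePred (AllTwo P) :=
  fun _ => Fintype.decidableForallFintype

def ctrlShift (P : Fin n → Prop) [DecidablePred P] (t : Fin n) (y : QS n) : QS n :=
  y + Pi.single t (if AllTwo P y then 1 else 0)

theorem ctrlP_congr {P P' : Fin n → Prop} [DecidablePred P] [DecidablePred P']
    (h : ∀ i, P i ↔ P' i) (t : Fin n) (A : Matrix (Fin 3) (Fin 3) ℂ) :
    ctrlP P t A = ctrlP P' t A := by
  obtain rfl : P = P' := funext fun i => propext (h i)
  congr

theorem Xp1m_apply (p q : Fin 3) : Xp1m p q = if p = q + 1 then 1 else 0 := by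
  fin_cases p <;> fin_cases q <;> simp [Xp1m]

theorem eq_add_single_iff {x y : QS n} {t : Fin n} {c : Fin 3} :
    x = y + Pi.single t c ↔ (∀ j, j ≠ t → x j = y j) ∧ x t = y t + c := by
  constructor
  · rintro rfl
    exact ⟨fun j hj => by simp [hj], by simp⟩
  · rintro ⟨hne, ht⟩
    funext j
    by_cases hj : j = t
    · subst hj; simpa using ht
    · simp [hj, hne j hj]

theorem ctrlP_Xp1m (P : Fin n → Prop) [DecidablePred P] (t : Fin n) :
    ctrlP P t Xp1m = funMatrix (ctrlShift P t) := by
  ext x y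
  simp only [ctrlP, funMatrix, Matrix.of_apply, ctrlShift, eq_add_single_iff]
  by_cases hne : ∀ j, j ≠ t → x j = y j
  · rw [if_pos hne]
    by_cases hy : AllTwo P y
    · rw [if_pos hy, if_pos (show ∀ i, P i → y i = 2 from hy), Xp1m_apply]
      simp only [and_iff_right hne]
    · rw [if_neg hy, if_neg (show ¬∀ i, P i → y i = 2 from hy), add_zero]
      simp only [and_iff_right hne]
  · rw [if_neg hne, if_neg (fun h => hne h.1)]

end ControlledShift

section AncillaRecycling

variable {n : ℕ} {P Q : Fin n → Prop} {a t : Fin n}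

theorem allTwo_add_single {w : Fin n} (hw : ¬P w) (y : QS n) (c : Fin 3) :
    AllTwo P (y + Pi.single w c) ↔ AllTwo P y :=
  forall_congr' fun i => imp_congr_right fun hi => by
    rw [Pi.add_apply, Pi.single_eq_of_ne (fun h : i = w => hw (h ▸ hi)), add_zero]

theorem allTwo_or (y : QS n) :
    AllTwo (fun i => P i ∨ Q i) y ↔ AllTwo P y ∧ AllTwo Q y := by
  simp only [AllTwo, or_imp, forall_and]

theorem allTwo_or_eq (y : QS n) :
    AllTwo (fun i => Q i ∨ i = a) y ↔ AllTwo Q y ∧ y a = 2 := by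
  simp only [AllTwo, or_imp, forall_and, forall_eq]

variable [DecidablePred P] [DecidablePred Q]

theorem ctrlShift_comp_add_single_add_single (hat : a ≠ t) (haP : ¬P a) (htP : ¬P t)
    (haQ : ¬Q a) (htQ : ¬Q t) (y : QS n) (i j : Fin 3) :
    (ctrlShift P a ∘ ctrlShift (fun k => Q k ∨ k = a) t) (y + Pi.single a i + Pi.single t j) =
      y + Pi.single a (i + if AllTwo P y then 1 else 0) +
        Pi.single t (j + if AllTwo Q y ∧ y a + i = 2 then 1 else 0) := by
  have hB : AllTwo (fun k => Q k ∨ k = a) (y + Pi.single a i + Pi.single t j) ↔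
      AllTwo Q y ∧ y a + i = 2 := by
    rw [allTwo_or_eq, allTwo_add_single htQ, allTwo_add_single haQ]
    simp [hat]
  have hA (c : Fin 3) :
      AllTwo P (y + Pi.single a i + Pi.single t j + Pi.single t c) ↔ AllTwo P y := by
    rw [allTwo_add_single htP, allTwo_add_single htP, allTwo_add_single haP]
  simp only [Function.comp_apply, ctrlShift, hB, hA, Pi.single_add]
  abel

theorem ctrlShift_comp_iterate_three (hat : a ≠ t) (haP : ¬P a) (htP : ¬P t)
    (haQ : ¬Q a) (htQ : ¬Q t) (y : QS n) :
    (ctrlShift P a ∘ ctrlShift (fun k => Q k ∨ k = a) t)^[3] y =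
      ctrlShift (fun k => P k ∨ Q k) t y := by
  have step := ctrlShift_comp_add_single_add_single hat haP htP haQ htQ y
  have step₀ := step 0 0
  simp only [Pi.single_zero, add_zero, zero_add] at step₀
  rw [Function.iterate_succ_apply, Function.iterate_succ_apply, Function.iterate_one, step₀,
    step, step, ctrlShift]
  have hthree : ∀ c : Fin 3, c + c + c = 0 := by decide
  -- three increments take the ancilla through |2⟩ exactly once
  have hcount : ∀ p : Fin 3, ((if p = 2 then 1 else 0) + if p + 1 = 2 then 1 else 0) +
      (if p + (1 + 1) = 2 then 1 else 0) = (1 : Fin 3) := by decide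
  simp only [allTwo_or]
  by_cases hA : AllTwo P y <;> by_cases hQ : AllTwo Q y <;>
    simp only [hA, hQ, if_true, if_false, true_and, false_and, and_true, and_false, add_zero,
      hthree, hcount, Pi.single_zero]

theorem ctrlP_mul_ctrlP_pow_three (hat : a ≠ t) (haP : ¬P a) (htP : ¬P t) (haQ : ¬Q a)
    (htQ : ¬Q t) :
    (ctrlP P a Xp1m * ctrlP (fun k => Q k ∨ k = a) t Xp1m) ^ 3 =
      ctrlP (fun k => P k ∨ Q k) t Xp1m := by
  rw [ctrlP_Xp1m, ctrlP_Xp1m, ctrlP_Xp1m, ← funMatrix_comp, funMatrix_pow]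
  exact congrArg funMatrix (funext (ctrlShift_comp_iterate_three hat haP htP haQ htQ))

end AncillaRecycling

/-- ancilla-recycling decomposition: with k = m + l controls, one ancilla `a`
and one target `t`, if `A` applies X+1 to `a` controlled on the first m controls being |2⟩,
and `B` applies X+1 to `t` controlled on the remaining l controls together with `a` being
|2⟩, then (A·B)³ is the X+1 gate on `t` controlled on all k controls being |2⟩ (acting as
the identity on the ancilla, whatever its state). -/
theorem ancilla_recycling_decomposition (m l : ℕ) :
    (ctrlP (fun i : Fin (m + l + 2) => (i : ℕ) < m) ⟨m + l, by omega⟩ Xp1m *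
        ctrlP (fun i : Fin (m + l + 2) => m ≤ (i : ℕ) ∧ (i : ℕ) ≤ m + l)
          ⟨m + l + 1, by omega⟩ Xp1m) ^ 3 =
      ctrlP (fun i : Fin (m + l + 2) => (i : ℕ) < m + l) ⟨m + l + 1, by omega⟩ Xp1m := by
  let Q : Fin (m + l + 2) → Prop := fun i => m ≤ (i : ℕ) ∧ (i : ℕ) < m + l
  have hB : ∀ i : Fin (m + l + 2),
      m ≤ (i : ℕ) ∧ (i : ℕ) ≤ m + l ↔ Q i ∨ i = ⟨m + l, by omega⟩ :=
    fun i => by simp only [Q, Fin.ext_iff]; omega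
  have hC : ∀ i : Fin (m + l + 2), (i : ℕ) < m + l ↔ (i : ℕ) < m ∨ Q i :=
    fun i => by simp only [Q]; omega
  rw [ctrlP_congr hB, ctrlP_congr hC]
  refine ctrlP_mul_ctrlP_pow_three ?_ ?_ ?_ ?_ ?_ <;> simp only [Q, ne_eq, Fin.ext_iff] <;> omega
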